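/- Fix integers m ≥ 1, n ≥ 1, N ≥ 1, set ν = (1+n)/2 and c = (1+m)(1+n)/2, and let p* denote the uniform probability vector with p*_{i,j} = 1/((1+m)(1+n)). Then as N' → ∞, Δ_{p*}(N, N') converges to E[log((1+m)(X + ν)/(N + c))], where X ~ Binomial(N, 1/(1+m)), and this limit is strictly negative. -/

import Mathlib

open Finset

/-- Binomial(N, q) probability mass function at `x`. -/
noncomputable def binPMF (N : ℕ) (q : ℝ) (x : ℕ) : ℝ :=
  (N.choose x : ℝ) * q ^ x * (1 - q) ^ (N - x)

/-- The entropy loss `L(d, p) = ∑ᵢ ∑ⱼ pᵢⱼ log (pᵢⱼ / dᵢⱼ)`. -/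
noncomputable def entropyLoss {m n : ℕ} (d p : Fin (m+1) → Fin (n+1) → ℝ) : ℝ :=
  ∑ i, ∑ j, p i j * Real.log (p i j / d i j)

/-- Support of the Multinomial(N, p) distribution on (1+m)(1+n) cells. -/
def suppX (m n N : ℕ) : Finset (Fin (m+1) → Fin (n+1) → Fin (N+1)) :=
  Finset.univ.filter fun x => ∑ i, ∑ j, (x i j : ℕ) = N

/-- Support of the Multinomial(N', p·) distribution on 1+m cells. -/
def suppY (m N' : ℕ) : Finset (Fin (m+1) → Fin (N'+1)) :=
  Finset.univ.filter fun y => ∑ i, (y i : ℕ) = N'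

/-- Multinomial(N, p) probability of the outcome `x`. -/
noncomputable def wX {m n N : ℕ} (p : Fin (m+1) → Fin (n+1) → ℝ)
    (x : Fin (m+1) → Fin (n+1) → Fin (N+1)) : ℝ :=
  (Nat.multinomial Finset.univ (fun k : Fin (m+1) × Fin (n+1) => (x k.1 k.2 : ℕ)) : ℝ) *
    ∏ i, ∏ j, p i j ^ (x i j : ℕ)

/-- Multinomial(N', (pᵢ.)ᵢ) probability of the outcome `y`, where `pᵢ. = ∑ⱼ pᵢⱼ`. -/
noncomputable def wY {m n N' : ℕ} (p : Fin (m+1) → Fin (n+1) → ℝ)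
    (y : Fin (m+1) → Fin (N'+1)) : ℝ :=
  (Nat.multinomial Finset.univ (fun i => (y i : ℕ)) : ℝ) *
    ∏ i, (∑ j, p i j) ^ (y i : ℕ)

/-- The estimator `p̃` based on the direct observations only. -/
noncomputable def ptilde {m n N : ℕ} (x : Fin (m+1) → Fin (n+1) → Fin (N+1)) :
    Fin (m+1) → Fin (n+1) → ℝ :=
  fun i j => ((x i j : ℝ) + 1/2) / ((N : ℝ) + (1 + m) * (1 + n) / 2)

/-- The estimator `p̂` based on the direct and aggregated observations. -/
noncomputable def phat {m n N N' : ℕ} (x : Fin (m+1) → Fin (n+1) → Fin (N+1))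
    (y : Fin (m+1) → Fin (N'+1)) : Fin (m+1) → Fin (n+1) → ℝ :=
  fun i j =>
    ((((∑ j', (x i j' : ℕ)) : ℕ) : ℝ) + (y i : ℝ) + (1 + n) / 2) /
        ((N : ℝ) + (N' : ℝ) + (1 + m) * (1 + n) / 2) *
      (((x i j : ℝ) + 1/2) / ((((∑ j', (x i j' : ℕ)) : ℕ) : ℝ) + (1 + n) / 2))

/-- The risk difference `Δ_p(N, N') = E_p[L(p̂, p)] − E_p[L(p̃, p)]`, the expectation being
a finite sum over the supports of the independent multinomial observations. -/
noncomputable def riskDiff (m n : ℕ) (p : Fin (m+1) → Fin (n+1) → ℝ) (N N' : ℕ) : ℝ :=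
  ∑ x ∈ suppX m n N, ∑ y ∈ suppY m N',
    wX p x * wY p y * (entropyLoss (phat x y) p - entropyLoss (ptilde x) p)

/-
For the uniform `p*` the ratio `p̃ᵢⱼ / p̂ᵢⱼ` depends on the row `i` only, so the loss
difference is a sum over rows of a function of the row count `Xᵢ ~ Bin(N, q)` and of
`Xᵢ + Yᵢ ~ Bin(N + N', q)`, `q = 1/(1+m)`; these marginals come from the multinomial theorem applied to `(A X + (1 - A))^N`
in `ℝ[X]`. Hence `Δ(N, N') = E(N) - E(N + N')` with `E(M) = E log((S + ν)/(M q + ν))`,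
`S ~ Bin(M, q)`. As `(S + ν)/(M q + ν)` has mean `1`, `log x ≤ x - 1` gives `E(M) ≤ 0`, strictly
for `M ≥ 1`. Conversely `log x ≥ 1 - 1/x`, `ν ≥ 1` and `E[1/(S + 1)] ≤ 1/((M + 1) q)` give
`E(M) ≥ (q - ν)/((M + 1) q)`, so `E(M) → 0` and `Δ(N, N') → E(N) < 0`.
-/

open Filter Real

lemma binPMF_nonneg {q : ℝ} (hq₀ : 0 ≤ q) (hq₁ : q ≤ 1) (M k : ℕ) : 0 ≤ binPMF M q k := by
  have := sub_nonneg.2 hq₁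
  unfold binPMF
  positivity

lemma sum_binPMF (M : ℕ) (q : ℝ) : ∑ k ∈ range (M + 1), binPMF M q k = 1 := by
  have h := (add_pow q (1 - q) M).symm
  rw [add_sub_cancel, one_pow] at h
  rw [← h]
  exact sum_congr rfl fun k _ => by unfold binPMF; ring

lemma succ_mul_binPMF_succ (M k : ℕ) (q : ℝ) :
    ((k : ℝ) + 1) * binPMF (M + 1) q (k + 1) = ((M : ℝ) + 1) * q * binPMF M q k := by
  have h : ((k : ℝ) + 1) * (M + 1).choose (k + 1) = ((M : ℝ) + 1) * M.choose k := by
    rw [mul_comm]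
    exact_mod_cast (Nat.add_one_mul_choose_eq M k).symm
  unfold binPMF
  rw [Nat.add_sub_add_right, pow_succ]
  linear_combination (q ^ k * q * (1 - q) ^ (M - k)) * h

lemma sum_mul_binPMF (M : ℕ) (q : ℝ) :
    ∑ k ∈ range (M + 1), (k : ℝ) * binPMF M q k = M * q := by
  cases M with
  | zero => simp
  | succ M =>
    rw [sum_range_succ', Nat.cast_zero, zero_mul, add_zero]
    simp_rw [Nat.cast_succ, succ_mul_binPMF_succ, ← mul_sum, sum_binPMF, mul_one]

lemma sum_binPMF_div_succ_le {q : ℝ} (hq₀ : 0 < q) (hq₁ : q ≤ 1) (M : ℕ) :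
    ∑ k ∈ range (M + 1), binPMF M q k / ((k : ℝ) + 1) ≤ 1 / (((M : ℝ) + 1) * q) := by
  have hMq : 0 < ((M : ℝ) + 1) * q := by positivity
  have hterm (k : ℕ) :
      binPMF M q k / ((k : ℝ) + 1) = binPMF (M + 1) q (k + 1) / (((M : ℝ) + 1) * q) := by
    rw [div_eq_div_iff (by positivity) hMq.ne']
    linear_combination -succ_mul_binPMF_succ M k q
  have htail : ∑ k ∈ range (M + 1), binPMF (M + 1) q (k + 1) ≤ 1 := by
    rw [← sum_binPMF (M + 1) q, sum_range_succ' _ (M + 1)]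
    exact le_add_of_nonneg_right (binPMF_nonneg hq₀.le hq₁ _ _)
  simp_rw [hterm, ← sum_div]
  exact div_le_div_of_nonneg_right htail hMq.le

lemma sum_choose_mul_choose_of_add_eq (N N' s : ℕ) :
    ∑ kl ∈ (range (N + 1) ×ˢ range (N' + 1)).filter (fun kl => kl.1 + kl.2 = s),
      (N.choose kl.1 : ℝ) * N'.choose kl.2 = (N + N').choose s := by
  rw [Nat.add_choose_eq]
  push_cast
  refine sum_subset (fun kl hkl => HasAntidiagonal.mem_antidiagonal.2 (mem_filter.1 hkl).2)
    fun kl hkl hnot => ?_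
  simp only [mem_filter, mem_product, mem_range, HasAntidiagonal.mem_antidiagonal] at hkl hnot
  rcases Nat.lt_or_ge N kl.1 with h | h
  · simp [Nat.choose_eq_zero_of_lt h]
  · simp [Nat.choose_eq_zero_of_lt (show N' < kl.2 by omega)]

lemma sum_binPMF_mul_binPMF_comp_add (N N' : ℕ) (q : ℝ) (G : ℕ → ℝ) :
    ∑ k ∈ range (N + 1), ∑ l ∈ range (N' + 1), binPMF N q k * binPMF N' q l * G (k + l)
      = ∑ s ∈ range (N + N' + 1), binPMF (N + N') q s * G s := by
  rw [← sum_product', ← sum_fiberwise_of_maps_to (g := fun kl : ℕ × ℕ => kl.1 + kl.2)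
    (t := range (N + N' + 1)) fun kl hkl => by simp only [mem_product, mem_range] at hkl ⊢; omega]
  refine sum_congr rfl fun s _ => ?_
  have hterm : ∀ kl ∈ (range (N + 1) ×ˢ range (N' + 1)).filter (fun kl => kl.1 + kl.2 = s),
      binPMF N q kl.1 * binPMF N' q kl.2 * G (kl.1 + kl.2)
        = (N.choose kl.1 : ℝ) * N'.choose kl.2 * (q ^ s * (1 - q) ^ (N + N' - s) * G s) := by
    rintro ⟨k, l⟩ hkl
    simp only [mem_filter, mem_product, mem_range] at hkl
    obtain ⟨⟨hk, hl⟩, rfl⟩ := hkl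
    rw [binPMF, binPMF, show N + N' - (k + l) = (N - k) + (N' - l) by omega, pow_add, pow_add]
    ring
  rw [sum_congr rfl hterm, ← sum_mul, sum_choose_mul_choose_of_add_eq, binPMF]
  ring

lemma sum_binPMF_mul_binPMF_mul_sub_comp_add (N N' : ℕ) (q : ℝ) (F G : ℕ → ℝ) :
    ∑ k ∈ range (N + 1), ∑ l ∈ range (N' + 1), binPMF N q k * binPMF N' q l * (F k - G (k + l))
      = ∑ k ∈ range (N + 1), binPMF N q k * F k
        - ∑ s ∈ range (N + N' + 1), binPMF (N + N') q s * G s := by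
  simp_rw [mul_sub, sum_sub_distrib, sum_binPMF_mul_binPMF_comp_add]
  congr 1
  refine sum_congr rfl fun k _ => ?_
  rw [← sum_mul, ← mul_sum, sum_binPMF, mul_one]

open Polynomial in
lemma sum_multinomial_mul_prod_pow_mul_comp_sum {ι : Type*} [Fintype ι] [DecidableEq ι]
    (s : Finset ι) (a : ι → ℝ) (ha : ∑ i, a i = 1) (N : ℕ) (F : ℕ → ℝ) :
    ∑ k ∈ piAntidiag univ N, (Nat.multinomial univ k : ℝ) * (∏ i, a i ^ k i) * F (∑ i ∈ s, k i)
      = ∑ j ∈ range (N + 1), binPMF N (∑ i ∈ s, a i) j * F j := by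
  set A := ∑ i ∈ s, a i
  -- `φ` turns `∑ cⱼ Xʲ` into `∑ cⱼ F j`; apply it to the multinomial and to the binomial
  -- expansion of `(∑ i, f i) ^ N = (A X + (1 - A)) ^ N`.
  let φ : ℝ[X] →ₗ[ℝ] ℝ := lsum fun j => LinearMap.mulRight ℝ (F j)
  have hφ (c : ℝ) (j : ℕ) : φ (C c * X ^ j) = c * F j := by
    simp [φ, C_mul_X_pow_eq_monomial, sum_monomial_index]
  let f : ι → ℝ[X] := fun i => C (a i) * X ^ (if i ∈ s then 1 else 0)
  have hsum : ∑ i, f i = C A * X + C (1 - A) := by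
    have hB : ∑ i ∈ sᶜ, a i = 1 - A := by rw [← ha, ← sum_add_sum_compl s a]; ring
    rw [← sum_add_sum_compl s f, sum_congr rfl fun i hi => show f i = C (a i) * X by simp [f, hi],
      sum_congr rfl fun i hi => show f i = C (a i) by simp [f, mem_compl.1 hi], ← sum_mul,
      ← map_sum, ← map_sum, hB]
  have hprod (k : ι → ℕ) : (Nat.multinomial univ k : ℝ[X]) * ∏ i, f i ^ k i
      = C (Nat.multinomial univ k * ∏ i, a i ^ k i) * X ^ (∑ i ∈ s, k i) := by
    have hfactor (i : ι) : f i ^ k i = C (a i ^ k i) * X ^ (if i ∈ s then k i else 0) := by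
      by_cases hi : i ∈ s <;> simp [f, hi, mul_pow]
    rw [prod_congr rfl fun i _ => hfactor i, prod_mul_distrib, ← map_prod, prod_pow_eq_pow_sum,
      sum_ite_mem, univ_inter, C_mul, map_natCast, mul_assoc]
  have hbinom : (C A * X + C (1 - A)) ^ N = ∑ j ∈ range (N + 1), C (binPMF N A j) * X ^ j := by
    rw [add_pow]
    refine sum_congr rfl fun j _ => ?_
    simp only [binPMF, C_mul, C_pow, mul_pow, ← map_natCast C]
    ring
  have key := congrArg φ ((sum_pow_eq_sum_piAntidiag univ f N).symm.trans (hsum ▸ hbinom))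
  simpa only [map_sum, hprod, hφ] using key

lemma sum_filter_sum_val_eq_sum_piAntidiag {κ : Type*} [Fintype κ] [DecidableEq κ] (N : ℕ)
    (G : (κ → ℕ) → ℝ) :
    ∑ x ∈ univ.filter (fun x : κ → Fin (N + 1) => ∑ k, (x k : ℕ) = N), G (fun k => x k)
      = ∑ k ∈ piAntidiag univ N, G k := by
  refine sum_nbij (fun x k => x k) (fun x hx => by simpa using hx)
    (fun x _ y _ h => funext fun k => Fin.ext (congrFun h k)) (fun k hk => ?_) fun _ _ => rfl
  have hsum := (mem_piAntidiag.1 hk).1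
  have hle (i : κ) : k i ≤ N := hsum ▸ single_le_sum (fun _ _ => Nat.zero_le _) (mem_univ i)
  exact ⟨fun i => ⟨k i, Nat.lt_succ_of_le (hle i)⟩, by simpa using hsum, rfl⟩

section Observations

variable {m n : ℕ} {p : Fin (m + 1) → Fin (n + 1) → ℝ}

lemma sum_suppX_eq_sum_piAntidiag (N : ℕ) (G : (Fin (m + 1) × Fin (n + 1) → ℕ) → ℝ) :
    ∑ x ∈ suppX m n N, G (fun k => x k.1 k.2) = ∑ k ∈ piAntidiag univ N, G k := by
  rw [← sum_filter_sum_val_eq_sum_piAntidiag]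
  exact sum_equiv (Equiv.curry _ _ _).symm (by simp [suppX, Fintype.sum_prod_type])
    fun _ _ => rfl

lemma sum_suppX_wX_mul_comp_rowSum (hp : ∑ i, ∑ j, p i j = 1) (N : ℕ) (i₀ : Fin (m + 1))
    (F : ℕ → ℝ) :
    ∑ x ∈ suppX m n N, wX p x * F (∑ j, (x i₀ j : ℕ))
      = ∑ k ∈ range (N + 1), binPMF N (∑ j, p i₀ j) k * F k := by
  have h := sum_multinomial_mul_prod_pow_mul_comp_sum ({i₀} ×ˢ univ) (fun k => p k.1 k.2)
    (by rwa [Fintype.sum_prod_type]) N F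
  rw [← sum_suppX_eq_sum_piAntidiag] at h
  simpa only [wX, sum_product, sum_singleton, Fintype.prod_prod_type] using h

lemma sum_suppY_wY_mul_comp_apply (hp : ∑ i, ∑ j, p i j = 1) (N' : ℕ) (i₀ : Fin (m + 1))
    (F : ℕ → ℝ) :
    ∑ y ∈ suppY m N', wY p y * F (y i₀ : ℕ)
      = ∑ l ∈ range (N' + 1), binPMF N' (∑ j, p i₀ j) l * F l := by
  have h := sum_multinomial_mul_prod_pow_mul_comp_sum {i₀} (fun i => ∑ j, p i j) hp N' F
  rw [← sum_filter_sum_val_eq_sum_piAntidiag] at h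
  simpa only [suppY, wY, sum_singleton] using h

lemma mul_log_div_sub_mul_log_div_mul {p d r : ℝ} (hd : d ≠ 0) (hr : r ≠ 0) :
    p * log (p / d) - p * log (p / (d * r)) = p * log r := by
  rcases eq_or_ne p 0 with rfl | hp
  · simp
  · rw [show p / d = p / (d * r) * r by field_simp,
      log_mul (div_ne_zero hp (mul_ne_zero hd hr)) hr]
    ring

lemma entropyLoss_phat_sub_entropyLoss_ptilde {N N' : ℕ}
    (x : Fin (m + 1) → Fin (n + 1) → Fin (N + 1)) (y : Fin (m + 1) → Fin (N' + 1)) :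
    entropyLoss (phat x y) p - entropyLoss (ptilde x) p
      = ∑ i, (∑ j, p i j) *
          (log ((((∑ j, (x i j : ℕ) : ℕ) : ℝ) + (1 + n) / 2) / ((N : ℝ) + (1 + m) * (1 + n) / 2))
            - log ((((∑ j, (x i j : ℕ) + y i : ℕ) : ℝ) + (1 + n) / 2)
                / (((N + N' : ℕ) : ℝ) + (1 + m) * (1 + n) / 2))) := by
  unfold entropyLoss
  rw [← sum_sub_distrib]
  refine sum_congr rfl fun i _ => ?_
  rw [← sum_sub_distrib, sum_mul]
  refine sum_congr rfl fun j _ => ?_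
  have hratio : ptilde x i j = phat x y i j *
      (((∑ j, (x i j : ℕ) : ℕ) + (1 + n) / 2) / (N + (1 + m) * (1 + n) / 2)
        / (((∑ j, (x i j : ℕ) : ℕ) + y i + (1 + n) / 2) / (N + N' + (1 + m) * (1 + n) / 2))) := by
    simp only [ptilde, phat]
    field_simp
  have hphat : phat x y i j ≠ 0 := by unfold phat; positivity
  rw [hratio, mul_log_div_sub_mul_log_div_mul hphat (by positivity),
    log_div (by positivity) (by positivity)]
  push_cast
  ring

lemma sum_suppX_sum_suppY_wX_mul_wY_mul (hp : ∑ i, ∑ j, p i j = 1) (N N' : ℕ) (i : Fin (m + 1))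
    (H : ℕ → ℕ → ℝ) :
    ∑ x ∈ suppX m n N, ∑ y ∈ suppY m N', wX p x * wY p y * H (∑ j, (x i j : ℕ)) (y i)
      = ∑ k ∈ range (N + 1), ∑ l ∈ range (N' + 1),
          binPMF N (∑ j, p i j) k * binPMF N' (∑ j, p i j) l * H k l := by
  have hY (x : Fin (m + 1) → Fin (n + 1) → Fin (N + 1)) :
      ∑ y ∈ suppY m N', wX p x * wY p y * H (∑ j, (x i j : ℕ)) (y i)
        = wX p x * ∑ l ∈ range (N' + 1), binPMF N' (∑ j, p i j) l * H (∑ j, (x i j : ℕ)) l := by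
    simp_rw [mul_assoc, ← mul_sum]
    rw [sum_suppY_wY_mul_comp_apply hp]
  rw [sum_congr rfl fun x _ => hY x,
    sum_suppX_wX_mul_comp_rowSum hp N i
      fun k => ∑ l ∈ range (N' + 1), binPMF N' (∑ j, p i j) l * H k l]
  simp_rw [mul_sum, mul_assoc]

theorem riskDiff_eq (hp : ∑ i, ∑ j, p i j = 1) (N N' : ℕ) :
    riskDiff m n p N N' = ∑ i, (∑ j, p i j) *
      (∑ k ∈ range (N + 1), binPMF N (∑ j, p i j) k *
          log (((k : ℝ) + (1 + n) / 2) / ((N : ℝ) + (1 + m) * (1 + n) / 2))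
        - ∑ s ∈ range (N + N' + 1), binPMF (N + N') (∑ j, p i j) s *
          log (((s : ℝ) + (1 + n) / 2) / (((N + N' : ℕ) : ℝ) + (1 + m) * (1 + n) / 2))) := by
  unfold riskDiff
  simp_rw [entropyLoss_phat_sub_entropyLoss_ptilde, mul_sum]
  rw [sum_congr rfl fun x _ => sum_comm, sum_comm]
  refine sum_congr rfl fun i _ => ?_
  simp_rw [mul_left_comm _ (∑ j, p i j), ← mul_sum]
  congr 1
  refine (sum_suppX_sum_suppY_wX_mul_wY_mul hp N N' i fun k l =>
      log (((k : ℝ) + (1 + n) / 2) / ((N : ℝ) + (1 + m) * (1 + n) / 2))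
        - log ((((k + l : ℕ) : ℝ) + (1 + n) / 2)
          / (((N + N' : ℕ) : ℝ) + (1 + m) * (1 + n) / 2))).trans ?_
  exact (sum_binPMF_mul_binPMF_mul_sub_comp_add _ _ _ _ fun s =>
      log (((s : ℝ) + (1 + n) / 2) / (((N + N' : ℕ) : ℝ) + (1 + m) * (1 + n) / 2)))

end Observations

section LogRatio

noncomputable def expectedLogRatio (q ν : ℝ) (M : ℕ) : ℝ :=
  ∑ s ∈ range (M + 1), binPMF M q s * log (((s : ℝ) + ν) / (M * q + ν))

variable {q ν : ℝ}

lemma sum_binPMF_mul_ratio_sub_one (hq : 0 ≤ q) (hν : 0 < ν) (M : ℕ) :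
    ∑ s ∈ range (M + 1), binPMF M q s * (((s : ℝ) + ν) / (M * q + ν) - 1) = 0 := by
  have hD : (0 : ℝ) < M * q + ν := by positivity
  have hmean : ∑ s ∈ range (M + 1), binPMF M q s * ((s : ℝ) + ν) = M * q + ν := by
    simp_rw [mul_add, sum_add_distrib, ← sum_mul, mul_comm (binPMF M q _), sum_mul_binPMF,
      sum_binPMF, one_mul]
  simp_rw [mul_sub, mul_one, sum_sub_distrib, sum_binPMF, mul_div_assoc', ← sum_div, hmean,
    div_self hD.ne', sub_self]

lemma expectedLogRatio_nonpos (hq₀ : 0 ≤ q) (hq₁ : q ≤ 1) (hν : 0 < ν) (M : ℕ) :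
    expectedLogRatio q ν M ≤ 0 :=
  (sum_le_sum fun s _ => mul_le_mul_of_nonneg_left (log_le_sub_one_of_pos (by positivity))
    (binPMF_nonneg hq₀ hq₁ M s)).trans (sum_binPMF_mul_ratio_sub_one hq₀ hν M).le

lemma expectedLogRatio_neg (hq₀ : 0 < q) (hq₁ : q < 1) (hν : 0 < ν) {M : ℕ} (hM : 1 ≤ M) :
    expectedLogRatio q ν M < 0 := by
  have hD : (0 : ℝ) < M * q + ν := by positivity
  have hb₀ : 0 < binPMF M q 0 := by
    have := sub_pos.2 hq₁
    simp only [binPMF, Nat.choose_zero_right, Nat.cast_one, pow_zero, one_mul, Nat.sub_zero]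
    positivity
  have hratio₀ : ((0 : ℕ) + ν) / (M * q + ν) ≠ 1 := by
    rw [Nat.cast_zero, zero_add, Ne, div_eq_one_iff_eq hD.ne']
    linarith [mul_pos (Nat.cast_pos.2 hM : (0 : ℝ) < M) hq₀]
  refine (sum_lt_sum (fun s _ => ?_) ⟨0, mem_range.2 (by omega), ?_⟩).trans_eq
    (sum_binPMF_mul_ratio_sub_one hq₀.le hν M)
  · exact mul_le_mul_of_nonneg_left (log_le_sub_one_of_pos (by positivity))
      (binPMF_nonneg hq₀.le hq₁.le M s)
  · exact mul_lt_mul_of_pos_left (log_lt_sub_one_of_pos (by positivity) hratio₀) hb₀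

lemma sub_div_le_expectedLogRatio (hq₀ : 0 < q) (hq₁ : q ≤ 1) (hν : 1 ≤ ν) (M : ℕ) :
    (q - ν) / (((M : ℝ) + 1) * q) ≤ expectedLogRatio q ν M := by
  calc (q - ν) / (((M : ℝ) + 1) * q) = 1 - (M * q + ν) * (1 / (((M : ℝ) + 1) * q)) := by
        field_simp
        ring
    _ ≤ 1 - (M * q + ν) * ∑ s ∈ range (M + 1), binPMF M q s / ((s : ℝ) + 1) := by
        gcongr
        exact sum_binPMF_div_succ_le hq₀ hq₁ M
    _ ≤ 1 - (M * q + ν) * ∑ s ∈ range (M + 1), binPMF M q s / ((s : ℝ) + ν) := by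
        gcongr 1 - _ * ?_
        exact sum_le_sum fun s _ => div_le_div_of_nonneg_left (binPMF_nonneg hq₀.le hq₁ M s)
          (by positivity) (by linarith)
    _ = ∑ s ∈ range (M + 1), binPMF M q s * (1 - (((s : ℝ) + ν) / (M * q + ν))⁻¹) := by
        simp_rw [mul_sub, mul_one, sum_sub_distrib, sum_binPMF, mul_sum, inv_div]
        congr 1
        exact sum_congr rfl fun s _ => by ring
    _ ≤ expectedLogRatio q ν M :=
        sum_le_sum fun s _ => mul_le_mul_of_nonneg_left (one_sub_inv_le_log_of_pos (by positivity))
          (binPMF_nonneg hq₀.le hq₁ M s)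

lemma tendsto_expectedLogRatio (hq₀ : 0 < q) (hq₁ : q ≤ 1) (hν : 1 ≤ ν) :
    Tendsto (expectedLogRatio q ν) atTop (nhds 0) := by
  have hlow : Tendsto (fun M : ℕ => (q - ν) / (((M : ℝ) + 1) * q)) atTop (nhds 0) :=
    tendsto_const_nhds.div_atTop
      ((tendsto_natCast_atTop_atTop.atTop_add tendsto_const_nhds).atTop_mul_const hq₀)
  exact tendsto_of_tendsto_of_tendsto_of_le_of_le hlow tendsto_const_nhds
    (sub_div_le_expectedLogRatio hq₀ hq₁ hν) (expectedLogRatio_nonpos hq₀.le hq₁ (by linarith))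

lemma sum_binPMF_mul_log_div_eq (hq : 0 < q) (hν : 0 < ν) (M : ℕ) :
    ∑ s ∈ range (M + 1), binPMF M q s * log (((s : ℝ) + ν) / (M + ν / q))
      = log q + expectedLogRatio q ν M := by
  unfold expectedLogRatio
  rw [← mul_one (log q), ← sum_binPMF M q, mul_sum, ← sum_add_distrib]
  refine sum_congr rfl fun s _ => ?_
  rw [show ((s : ℝ) + ν) / (M + ν / q) = q * (((s : ℝ) + ν) / (M * q + ν)) by field_simp,
    log_mul hq.ne' (by positivity)]
  ring

end LogRatio

theorem riskDiff_uniform (m n N N' : ℕ) :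
    riskDiff m n (fun _ _ => 1 / ((1 + (m : ℝ)) * (1 + (n : ℝ)))) N N'
      = expectedLogRatio (1 / (1 + m)) ((1 + n) / 2) N
        - expectedLogRatio (1 / (1 + m)) ((1 + n) / 2) (N + N') := by
  have hrow : ∑ _j : Fin (n + 1), 1 / ((1 + (m : ℝ)) * (1 + (n : ℝ))) = 1 / (1 + m) := by
    rw [sum_const, card_univ, Fintype.card_fin, nsmul_eq_mul]
    push_cast
    field_simp
    ring
  have htotal :
      ∑ _i : Fin (m + 1), ∑ _j : Fin (n + 1), 1 / ((1 + (m : ℝ)) * (1 + (n : ℝ))) = 1 := by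
    rw [hrow, sum_const, card_univ, Fintype.card_fin, nsmul_eq_mul]
    push_cast
    field_simp
    ring
  have hc : (1 + (m : ℝ)) * (1 + n) / 2 = (1 + n) / 2 / (1 / (1 + m)) := by
    field_simp
  rw [riskDiff_eq htotal, hrow, hc, sum_binPMF_mul_log_div_eq (by positivity) (by positivity),
    sum_binPMF_mul_log_div_eq (by positivity) (by positivity), sum_const, card_univ,
    Fintype.card_fin, nsmul_eq_mul]
  push_cast
  field_simp
  ring

open Filter in
theorem risk_difference_limit_large_aggregated (m n N : ℕ)
    (hm : 1 ≤ m) (hn : 1 ≤ n) (hN : 1 ≤ N) :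
    Tendsto
        (fun N' : ℕ => riskDiff m n (fun _ _ => 1 / ((1 + (m : ℝ)) * (1 + (n : ℝ)))) N N')
        atTop
        (nhds (∑ x ∈ Finset.range (N+1),
          binPMF N (1 / (1 + (m : ℝ))) x *
            Real.log ((1 + (m : ℝ)) * ((x : ℝ) + (1 + n) / 2) /
              ((N : ℝ) + (1 + m) * (1 + n) / 2)))) ∧
      (∑ x ∈ Finset.range (N+1),
          binPMF N (1 / (1 + (m : ℝ))) x *
            Real.log ((1 + (m : ℝ)) * ((x : ℝ) + (1 + n) / 2) /
              ((N : ℝ) + (1 + m) * (1 + n) / 2))) < 0 := by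
  have hq₀ : (0 : ℝ) < 1 / (1 + m) := by positivity
  have hq₁ : 1 / (1 + (m : ℝ)) < 1 := by
    rw [div_lt_one (by positivity)]
    exact_mod_cast Nat.lt_add_of_pos_right hm
  have hν : (1 : ℝ) ≤ (1 + n) / 2 := by
    rw [le_div_iff₀ two_pos]
    exact_mod_cast Nat.add_le_add_left hn 1
  have hlimit : ∑ x ∈ range (N + 1), binPMF N (1 / (1 + (m : ℝ))) x *
        log ((1 + (m : ℝ)) * ((x : ℝ) + (1 + n) / 2) / ((N : ℝ) + (1 + m) * (1 + n) / 2))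
      = expectedLogRatio (1 / (1 + m)) ((1 + n) / 2) N :=
    sum_congr rfl fun x _ => by field_simp
  rw [hlimit]
  refine ⟨?_, expectedLogRatio_neg hq₀ hq₁ (by linarith) hN⟩
  have hvanish := (tendsto_expectedLogRatio hq₀ hq₁.le hν).comp (tendsto_add_atTop_nat N)
  have hdiff := (tendsto_const_nhds (x := expectedLogRatio (1 / (1 + m)) ((1 + n) / 2) N)).sub
    hvanish
  rw [sub_zero] at hdiff
  exact hdiff.congr fun N' => by rw [riskDiff_uniform, Function.comp_apply, add_comm N' N]
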